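/- arXiv:1711.09802 — 2 statements merged into one kernel-verified Lean document; each statement's English description precedes it below -/
import Mathlib

section
/- Let N ≥ 3 and let ρ : {0,...,N} → ℝ. Then Σ_{k=2}^{N} (k-2)(ρ(k-1)+ρ(k))·C(N-2, k-2) = (N-2)·Σ_{k=2}^{N} ρ(k)·C(N-2, k-2). -/
open Finset

lemma auxA (m : ℕ) (f : ℕ → ℝ) :
    ∑ j ∈ range (m+2), (j:ℝ) * f j * ((m+1).choose j : ℝ)
      = (m+1 : ℝ) * ∑ i ∈ range (m+1), f (i+1) * (m.choose i : ℝ) := by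
  rw [Finset.sum_range_succ' (fun j => (j:ℝ) * f j * ((m+1).choose j : ℝ))]
  simp only [Nat.cast_zero, zero_mul, add_zero]
  rw [Finset.mul_sum]
  apply Finset.sum_congr rfl
  intro i _
  have h : (m+1) * m.choose i = (m+1).choose (i+1) * (i+1) := Nat.add_one_mul_choose_eq m i
  have h' : ((m:ℝ)+1) * (m.choose i : ℝ) = ((m+1).choose (i+1) : ℝ) * ((i:ℝ)+1) := by
    exact_mod_cast congrArg (Nat.cast (R := ℝ)) h
  push_cast
  linear_combination (-(f (i+1))) * h'

lemma auxB (m : ℕ) (h : ℕ → ℝ) :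
    ∑ j ∈ range (m+2), h j * ((m+1).choose j : ℝ)
      = ∑ i ∈ range (m+1), h i * (m.choose i : ℝ)
      + ∑ i ∈ range (m+1), h (i+1) * (m.choose i : ℝ) := by
  rw [Finset.sum_range_succ' (fun j => h j * ((m+1).choose j : ℝ))]
  simp only [Nat.choose_succ_succ, Nat.cast_add, Nat.choose_zero_right, Nat.cast_one, mul_one,
    mul_add]
  rw [Finset.sum_add_distrib]
  have key : ∑ i ∈ range (m+1), h (i+1) * (m.choose (i+1) : ℝ)
      = ∑ i ∈ range (m+1), h i * (m.choose i : ℝ) - h 0 := by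
    have := Finset.sum_range_succ' (fun j => h j * (m.choose j : ℝ)) (m+1)
    have h2 : ∑ j ∈ range (m+2), h j * (m.choose j : ℝ)
        = ∑ j ∈ range (m+1), h j * (m.choose j : ℝ) := by
      rw [Finset.sum_range_succ]
      simp [Nat.choose_succ_self]
    simp only [Nat.choose_zero_right, Nat.cast_one, mul_one] at this
    rw [h2] at this
    linarith
  rw [key]
  ring

theorem stmt10 (N : ℕ) (hN : 3 ≤ N) (ρ : ℕ → ℝ) :
    ∑ k ∈ Finset.Icc 2 N,
        ((k : ℝ) - 2) * (ρ (k - 1) + ρ k) * (Nat.choose (N - 2) (k - 2) : ℝ) =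
      (N - 2 : ℝ) * ∑ k ∈ Finset.Icc 2 N, ρ k * (Nat.choose (N - 2) (k - 2) : ℝ) := by
  obtain ⟨m, rfl⟩ : ∃ m, N = m + 3 := ⟨N - 3, by omega⟩
  have hIcc : Finset.Icc 2 (m+3) = Finset.Ico 2 (m+4) := by
    ext x; simp; omega
  rw [hIcc, Finset.sum_Ico_eq_sum_range, Finset.sum_Ico_eq_sum_range]
  have hr : m + 4 - 2 = m + 2 := by omega
  rw [hr]
  have hc : ∀ j, (2 + j) - 2 = j := fun j => by omega
  have hc1 : ∀ j, (2 + j) - 1 = j + 1 := fun j => by omega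
  have hc2 : m + 3 - 2 = m + 1 := by omega
  simp only [hc, hc1, hc2]
  have hcast : ∀ j : ℕ, ((2 + j : ℕ) : ℝ) - 2 = (j : ℝ) := by intro j; push_cast; ring
  calc ∑ j ∈ range (m+2), (((2+j:ℕ):ℝ) - 2) * (ρ (j+1) + ρ (2+j)) * ((m+1).choose j : ℝ)
      = ∑ j ∈ range (m+2), (j:ℝ) * ((fun i => ρ (i+1) + ρ (i+2)) j) * ((m+1).choose j : ℝ) := by
        apply Finset.sum_congr rfl; intro j _
        rw [hcast, show 2 + j = j + 2 by omega]
    _ = (m+1 : ℝ) * ∑ i ∈ range (m+1), (ρ (i+1+1) + ρ (i+1+2)) * (m.choose i : ℝ) := by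
        rw [auxA m (fun i => ρ (i+1) + ρ (i+2))]
    _ = (m+1 : ℝ) * (∑ i ∈ range (m+1), (fun j => ρ (j+2)) i * (m.choose i : ℝ)
          + ∑ i ∈ range (m+1), (fun j => ρ (j+2)) (i+1) * (m.choose i : ℝ)) := by
        rw [← Finset.sum_add_distrib]
        congr 1
        apply Finset.sum_congr rfl; intro i _
        simp only
        rw [show i+1+1 = i+2 by omega, show i+1+2 = i+1+2 from rfl]
        ring
    _ = (m+1 : ℝ) * ∑ j ∈ range (m+2), (fun i => ρ (i+2)) j * ((m+1).choose j : ℝ) := by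
        rw [auxB m (fun i => ρ (i+2))]
    _ = (((m:ℕ):ℝ)+3-2) * ∑ j ∈ range (m+2), ρ (2+j) * ((m+1).choose j : ℝ) := by
        rw [show ((m:ℕ):ℝ)+3-2 = (m:ℝ)+1 by ring]
        congr 1
        apply Finset.sum_congr rfl; intro j _
        rw [show 2 + j = j + 2 by omega]
    _ = ((m + 3 : ℕ) - 2 : ℝ) * ∑ j ∈ range (m+2), ρ (2+j) * ((m+1).choose j : ℝ) := by
        push_cast; ring
end

section
/- For the Peer Assembly with N = 3 agents, rates q12, q21 > 0 and influence intensities λ1, λ2 ≥ 0, the stationary expected fraction of opinion-1 agents is E[n1/N] = q21(φ + q12(λ2−λ1)) / (q·φ + q12(3q(λ2−λ1) + λ2²−λ1²)), where q = q12+q21 and φ = 2q² + 3qλ1 + λ1². In particular, when λ1 = λ2 this equals q21/q. -/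
theorem stmt14 (q12 q21 lam1 lam2 : ℝ)
    (hq12 : 0 < q12) (hq21 : 0 < q21) (hl1 : 0 ≤ lam1) (hl2 : 0 ≤ lam2) :
    let μ : ℕ → ℝ := fun j => (q21 + lam1 * ((j : ℝ) - 1) / 2) * (4 - (j : ℝ))
    let ν : ℕ → ℝ := fun j => (q12 + lam2 * (2 - (j : ℝ)) / 2) * ((j : ℝ) + 1)
    let ratio : ℕ → ℝ := fun i =>
      (∏ j ∈ Finset.Icc 1 i, μ j) / (∏ j ∈ Finset.range i, ν j)
    let p0 : ℝ := (1 + ∑ i ∈ Finset.Icc 1 3, ratio i)⁻¹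
    let p : ℕ → ℝ := fun i => p0 * ratio i
    let q : ℝ := q12 + q21
    let φ : ℝ := 2 * q ^ 2 + 3 * q * lam1 + lam1 ^ 2
    (∑ i ∈ Finset.range 4, (i : ℝ) * p i) / 3 =
        q21 * (φ + q12 * (lam2 - lam1)) /
          (q * φ + q12 * (3 * q * (lam2 - lam1) + lam2 ^ 2 - lam1 ^ 2)) ∧
      (lam1 = lam2 → (∑ i ∈ Finset.range 4, (i : ℝ) * p i) / 3 = q21 / q) := by
  intro μ ν ratio p0 p q φ
  have hIcc : Finset.Icc 1 3 = ({1, 2, 3} : Finset ℕ) := by decide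
  have hI1 : Finset.Icc 1 1 = ({1} : Finset ℕ) := by decide
  have hI2 : Finset.Icc 1 2 = ({1, 2} : Finset ℕ) := by decide
  have ha : (0:ℝ) < q12 + lam2 := by linarith
  have hb : (0:ℝ) < q12 + lam2 / 2 := by linarith
  have hq : (0:ℝ) < q12 + q21 := by linarith
  have r1 : ratio 1 = q21 * 3 / (q12 + lam2) := by
    simp only [ratio, μ, ν, hI1, Finset.prod_singleton, Finset.prod_range_succ,
      Finset.prod_range_zero]
    norm_num
  have r2 : ratio 2 = (q21 * 3 * ((q21 + lam1 / 2) * 2)) /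
      ((q12 + lam2) * ((q12 + lam2 / 2) * 2)) := by
    simp only [ratio, μ, ν, hI2]
    rw [Finset.prod_insert (by decide), Finset.prod_singleton]
    simp only [Finset.prod_range_succ, Finset.prod_range_zero]
    norm_num
  have r3 : ratio 3 = (q21 * 3 * ((q21 + lam1 / 2) * 2) * (q21 + lam1)) /
      ((q12 + lam2) * ((q12 + lam2 / 2) * 2) * (q12 * 3)) := by
    simp only [ratio, μ, ν, hIcc]
    rw [Finset.prod_insert (by decide), Finset.prod_insert (by decide),
      Finset.prod_singleton]
    simp only [Finset.prod_range_succ, Finset.prod_range_zero]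
    norm_num
    ring
  have hr1 : 0 ≤ ratio 1 := by rw [r1]; positivity
  have hr2 : 0 ≤ ratio 2 := by rw [r2]; positivity
  have hr3 : 0 ≤ ratio 3 := by rw [r3]; positivity
  have hsum : ∑ i ∈ Finset.Icc 1 3, ratio i = ratio 1 + ratio 2 + ratio 3 := by
    rw [hIcc, Finset.sum_insert (by decide), Finset.sum_insert (by decide),
      Finset.sum_singleton]; ring
  have hS : (0:ℝ) < 1 + ∑ i ∈ Finset.Icc 1 3, ratio i := by rw [hsum]; linarith
  have hE : ∑ i ∈ Finset.range 4, (i : ℝ) * p i =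
      p0 * (ratio 1 + 2 * ratio 2 + 3 * ratio 3) := by
    simp only [Finset.sum_range_succ, Finset.sum_range_zero, p]
    push_cast
    ring
  have hD : (0:ℝ) < q * φ + q12 * (3 * q * (lam2 - lam1) + lam2 ^ 2 - lam1 ^ 2) := by
    have : q * φ + q12 * (3 * q * (lam2 - lam1) + lam2 ^ 2 - lam1 ^ 2) =
        2 * (q12 + q21)^3 + 3 * (q12 + q21) * q21 * lam1 + q21 * lam1 ^ 2 +
        3 * (q12 + q21) * q12 * lam2 + q12 * lam2 ^ 2 := by
      simp only [q, φ]; ring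
    rw [this]; positivity
  have key : (∑ i ∈ Finset.range 4, (i : ℝ) * p i) / 3 =
      q21 * (φ + q12 * (lam2 - lam1)) /
        (q * φ + q12 * (3 * q * (lam2 - lam1) + lam2 ^ 2 - lam1 ^ 2)) := by
    rw [hE]
    have hp0 : p0 = (1 + ∑ i ∈ Finset.Icc 1 3, ratio i)⁻¹ := rfl
    have hSne : (1 + ∑ i ∈ Finset.Icc 1 3, ratio i) ≠ 0 := ne_of_gt hS
    rw [hp0, hsum, r1, r2, r3]
    rw [hsum, r1, r2, r3] at hSne
    simp only [q, φ] at hD ⊢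
    rw [inv_mul_eq_div, div_div, div_eq_div_iff (by positivity) (ne_of_gt hD)]
    field_simp
    ring
  refine ⟨key, fun h => ?_⟩
  rw [key, h]
  have hφ : (0:ℝ) < φ := by simp only [φ]; positivity
  rw [show lam2 - lam2 = 0 by ring]
  simp only [mul_zero, add_zero, sub_self, zero_add]
  rw [mul_div_mul_right _ _ (ne_of_gt hφ)]
end
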